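/- Let X be a random vector in ℝ^d with density p₀ such that -log p₀ is m₀-strongly convex with unique minimizer x*. Then (E‖X‖²)^{1/2} ≤ √(2d/m₀) + ‖x*‖. -/

import Mathlib

/-!
Put `V = -log p₀ - (-log p₀ x*)`, a convex function vanishing at its minimum `x*`. Convexity gives
`V (x* + t y) ≤ t V (x* + y)` for `t ≤ 1`, so the homothety of ratio `t` centred at `x*` yields
`∫ exp (-t V) ≤ t⁻ᵈ ∫ exp (-V)`. Comparing with `exp (-t V) ≥ exp (-V) (1 + (1 - t) V)` and letting
`t → 1` gives `E[V(X)] ≤ d`. Strong convexity gives `V x ≥ m₀ / 2 ‖x - x*‖²`, hence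
`E‖X - x*‖² ≤ 2d / m₀`, and Minkowski's inequality in `L²` adds `‖x*‖`.
-/

open MeasureTheory Set Real Filter Module Topology
open scoped ENNReal

theorem UniformConvexOn.le_sub_of_isMinOn {E : Type*} [NormedAddCommGroup E] [NormedSpace ℝ E]
    {s : Set E} {φ : ℝ → ℝ} {f : E → ℝ} {x₀ x : E} (hf : UniformConvexOn s φ f)
    (hmin : IsMinOn f s x₀) (hx₀ : x₀ ∈ s) (hx : x ∈ s) :
    φ ‖x - x₀‖ ≤ f x - f x₀ := by
  refine (le_iff_forall_one_lt_le_mul₀ (sub_nonneg.2 (hmin hx))).2 fun ε hε => ?_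
  have hε₀ : 0 < ε := zero_lt_one.trans hε
  set b := ε⁻¹
  have hb : 0 < b := inv_pos.2 hε₀
  have ha : 0 < 1 - b := sub_pos.2 (inv_lt_one_of_one_lt₀ hε)
  have hab : 1 - b + b = 1 := sub_add_cancel 1 b
  have hconv := hf.2 hx hx₀ ha.le hb.le hab
  have hmin' : f x₀ ≤ f ((1 - b) • x + b • x₀) := hmin (hf.1 hx hx₀ ha.le hb.le hab)
  simp only [smul_eq_mul] at hconv
  have key : (1 - b) * (b * φ ‖x - x₀‖) ≤ (1 - b) * (f x - f x₀) := by linarith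
  rw [mul_comm, ← inv_mul_le_iff₀ hε₀]
  exact le_of_mul_le_mul_left key ha

theorem le_natCast_mul_of_forall_one_sub_mul_le {a b : ℝ} {n : ℕ} (hb : 0 ≤ b)
    (h : ∀ t ∈ Ioo (0 : ℝ) 1, b + (1 - t) * a ≤ (t ^ n)⁻¹ * b) : a ≤ n * b := by
  have hbound : ∀ t ∈ Ioo (0 : ℝ) 1, t ^ n * a ≤ n * b := fun t ⟨ht₀, ht₁⟩ => by
    have htn : 0 < t ^ n := pow_pos ht₀ n
    have hscaled : t ^ n * b + (1 - t) * (t ^ n * a) ≤ b := by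
      have := mul_le_mul_of_nonneg_left (h t ⟨ht₀, ht₁⟩) htn.le
      rw [mul_inv_cancel_left₀ htn.ne'] at this
      linarith
    have hbernoulli : 1 + n * (t - 1) ≤ (1 + (t - 1)) ^ n := one_add_mul_le_pow (by linarith) n
    rw [add_sub_cancel] at hbernoulli
    have : (1 - t) * (t ^ n * a) ≤ (1 - t) * (n * b) := by
      linarith [mul_le_mul_of_nonneg_right hbernoulli hb]
    exact le_of_mul_le_mul_left this (sub_pos.2 ht₁)
  have hcont : Continuous fun t : ℝ => t ^ n * a := by fun_prop
  refine le_of_tendsto ((hcont.tendsto' 1 a (by simp)).mono_left (nhdsWithin_le_nhds (s := Iio 1))) ?_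
  filter_upwards [Ioo_mem_nhdsLT (zero_lt_one' ℝ)] using hbound

section AddHaar

variable {E : Type*} [NormedAddCommGroup E] [NormedSpace ℝ E] [MeasurableSpace E] [BorelSpace E]
  [FiniteDimensional ℝ E] (μ : Measure E) [μ.IsAddHaarMeasure]

theorem MeasureTheory.Measure.lintegral_comp_smul (f : E → ℝ≥0∞) {r : ℝ} (hr : r ≠ 0) :
    ∫⁻ x, f (r • x) ∂μ = ENNReal.ofReal |(r ^ finrank ℝ E)⁻¹| * ∫⁻ x, f x ∂μ := by
  rw [← smul_eq_mul, ← lintegral_smul_measure, ← map_addHaar_smul μ hr]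
  exact (lintegral_map_equiv f (Homeomorph.smulOfNeZero r hr).toMeasurableEquiv).symm

theorem ConvexOn.lintegral_exp_neg_mul_le {V : E → ℝ} (hV : ConvexOn ℝ univ V) {x₀ : E}
    (hx₀ : V x₀ ≤ 0) {t : ℝ} (ht₀ : 0 < t) (ht₁ : t ≤ 1) :
    ∫⁻ x, ENNReal.ofReal (exp (-(t * V x))) ∂μ ≤
      ENNReal.ofReal ((t ^ finrank ℝ E)⁻¹) * ∫⁻ x, ENNReal.ofReal (exp (-V x)) ∂μ := by
  have hcontract : ∀ x, V (x₀ + t • x) ≤ t * V (x₀ + x) := fun x => by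
    have h := hV.2 (mem_univ (x₀ + x)) (mem_univ x₀) ht₀.le (sub_nonneg.2 ht₁)
      (add_sub_cancel t 1)
    rw [show t • (x₀ + x) + (1 - t) • x₀ = x₀ + t • x by module, smul_eq_mul, smul_eq_mul] at h
    linarith [mul_nonpos_of_nonneg_of_nonpos (sub_nonneg.2 ht₁) hx₀]
  calc ∫⁻ x, ENNReal.ofReal (exp (-(t * V x))) ∂μ
      = ∫⁻ x, ENNReal.ofReal (exp (-(t * V (x₀ + x)))) ∂μ :=
        (lintegral_add_left_eq_self (fun y => ENNReal.ofReal (exp (-(t * V y)))) x₀).symm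
    _ ≤ ∫⁻ x, ENNReal.ofReal (exp (-V (x₀ + t • x))) ∂μ :=
        lintegral_mono fun x => ENNReal.ofReal_le_ofReal (exp_le_exp.2 (neg_le_neg (hcontract x)))
    _ = ENNReal.ofReal ((t ^ finrank ℝ E)⁻¹) * ∫⁻ x, ENNReal.ofReal (exp (-V x)) ∂μ := by
        rw [Measure.lintegral_comp_smul μ (fun y => ENNReal.ofReal (exp (-V (x₀ + y)))) ht₀.ne',
          lintegral_add_left_eq_self (fun y => ENNReal.ofReal (exp (-V y))) x₀,
          abs_of_pos (by positivity)]

theorem ConvexOn.lintegral_mul_exp_neg_le {V : E → ℝ} (hV : ConvexOn ℝ univ V)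
    (hV₀ : ∀ x, 0 ≤ V x) {x₀ : E} (hx₀ : V x₀ = 0)
    (hZ : ∫⁻ x, ENNReal.ofReal (exp (-V x)) ∂μ ≠ ∞) :
    ∫⁻ x, ENNReal.ofReal (V x * exp (-V x)) ∂μ ≤
      finrank ℝ E * ∫⁻ x, ENNReal.ofReal (exp (-V x)) ∂μ := by
  set Z := ∫⁻ x, ENNReal.ofReal (exp (-V x)) ∂μ
  set M := ∫⁻ x, ENNReal.ofReal (V x * exp (-V x)) ∂μ
  have hstep : ∀ t ∈ Ioo (0 : ℝ) 1,
      Z + ENNReal.ofReal (1 - t) * M ≤ ENNReal.ofReal ((t ^ finrank ℝ E)⁻¹) * Z :=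
    fun t ⟨ht₀, ht₁⟩ => calc
      Z + ENNReal.ofReal (1 - t) * M
          ≤ ∫⁻ x, ENNReal.ofReal (exp (-V x)) + ENNReal.ofReal (1 - t) *
              ENNReal.ofReal (V x * exp (-V x)) ∂μ :=
        (add_le_add_right (lintegral_const_mul_le _ _) _).trans (le_lintegral_add _ _)
      _ ≤ ∫⁻ x, ENNReal.ofReal (exp (-(t * V x))) ∂μ := lintegral_mono fun x => by
        rw [← ENNReal.ofReal_mul (sub_pos.2 ht₁).le,
          ← ENNReal.ofReal_add (exp_pos _).le (by have := hV₀ x; positivity)]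
        refine ENNReal.ofReal_le_ofReal ?_
        calc exp (-V x) + (1 - t) * (V x * exp (-V x)) = exp (-V x) * ((1 - t) * V x + 1) := by
              ring
          _ ≤ exp (-V x) * exp ((1 - t) * V x) :=
              mul_le_mul_of_nonneg_left (add_one_le_exp _) (exp_pos _).le
          _ = exp (-(t * V x)) := by rw [← exp_add]; ring_nf
      _ ≤ ENNReal.ofReal ((t ^ finrank ℝ E)⁻¹) * Z :=
        hV.lintegral_exp_neg_mul_le μ hx₀.le ht₀ ht₁.le
  have hM : M ≠ ∞ := by
    have h := (hstep 2⁻¹ ⟨by norm_num, by norm_num⟩).trans_lt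
      (ENNReal.mul_lt_top ENNReal.ofReal_lt_top hZ.lt_top)
    exact (ENNReal.lt_top_of_mul_ne_top_right (ENNReal.add_lt_top.1 h).2.ne (by norm_num)).ne
  rw [← ENNReal.ofReal_toReal hZ, ← ENNReal.ofReal_toReal hM, ← ENNReal.ofReal_natCast,
    ← ENNReal.ofReal_mul (Nat.cast_nonneg _)]
  refine ENNReal.ofReal_le_ofReal (le_natCast_mul_of_forall_one_sub_mul_le ENNReal.toReal_nonneg
    fun t ht => ?_)
  have h := hstep t ht
  rw [← ENNReal.ofReal_toReal hZ, ← ENNReal.ofReal_toReal hM,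
    ← ENNReal.ofReal_mul (sub_pos.2 ht.2).le,
    ← ENNReal.ofReal_add ENNReal.toReal_nonneg (mul_nonneg (sub_pos.2 ht.2).le ENNReal.toReal_nonneg),
    ← ENNReal.ofReal_mul (by have := ht.1; positivity)] at h
  exact (ENNReal.ofReal_le_ofReal_iff (by have := ht.1; positivity)).1 h

theorem ConvexOn.lintegral_withDensity_exp_neg_le {V : E → ℝ} (hV : ConvexOn ℝ univ V)
    (hV₀ : ∀ x, 0 ≤ V x) {x₀ : E} (hx₀ : V x₀ = 0) {c : ℝ}
    (hc : ∫⁻ x, ENNReal.ofReal (c * exp (-V x)) ∂μ = 1) :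
    ∫⁻ x, ENNReal.ofReal (V x) ∂μ.withDensity (fun x => ENNReal.ofReal (c * exp (-V x))) ≤
      finrank ℝ E := by
  have hVm : Measurable V := (continuousOn_univ.1 (hV.continuousOn isOpen_univ)).measurable
  have hsplit : ∀ x, ENNReal.ofReal (c * exp (-V x)) =
      ENNReal.ofReal c * ENNReal.ofReal (exp (-V x)) :=
    fun x => ENNReal.ofReal_mul' (exp_pos _).le
  have hcZ : ENNReal.ofReal c * ∫⁻ x, ENNReal.ofReal (exp (-V x)) ∂μ = 1 := by
    rw [← lintegral_const_mul' _ _ ENNReal.ofReal_ne_top, ← hc]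
    simp_rw [hsplit]
  have hZ : ∫⁻ x, ENNReal.ofReal (exp (-V x)) ∂μ ≠ ∞ := fun h => by
    rw [h] at hcZ
    rcases eq_or_ne (ENNReal.ofReal c) 0 with h0 | h0 <;> simp_all [ENNReal.mul_top]
  calc ∫⁻ x, ENNReal.ofReal (V x) ∂μ.withDensity (fun x => ENNReal.ofReal (c * exp (-V x)))
      ≤ ∫⁻ x, ENNReal.ofReal (c * exp (-V x)) * ENNReal.ofReal (V x) ∂μ :=
        lintegral_withDensity_le_lintegral_mul μ (by fun_prop) _
    _ = ENNReal.ofReal c * ∫⁻ x, ENNReal.ofReal (V x * exp (-V x)) ∂μ := by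
        rw [← lintegral_const_mul' _ _ ENNReal.ofReal_ne_top]
        congr 1 with x
        rw [hsplit, ENNReal.ofReal_mul (hV₀ x), mul_comm (ENNReal.ofReal (V x)), mul_assoc]
    _ ≤ ENNReal.ofReal c * (finrank ℝ E * ∫⁻ x, ENNReal.ofReal (exp (-V x)) ∂μ) := by
        gcongr
        exact hV.lintegral_mul_exp_neg_le μ hV₀ hx₀ hZ
    _ = finrank ℝ E := by rw [mul_left_comm, hcZ, mul_one]

theorem StrongConvexOn.lintegral_enorm_sub_sq_withDensity_le {p : E → ℝ} {m : ℝ}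
    (hconv : StrongConvexOn univ m fun x => -log (p x)) (hm : 0 < m) (hp : ∀ x, 0 < p x)
    (hp₁ : ∫⁻ x, ENNReal.ofReal (p x) ∂μ = 1) {x₀ : E}
    (hmin : IsMinOn (fun x => -log (p x)) univ x₀) :
    ∫⁻ x, ‖x - x₀‖ₑ ^ 2 ∂μ.withDensity (fun x => ENNReal.ofReal (p x)) ≤
      ENNReal.ofReal (2 * finrank ℝ E / m) := by
  set V := fun x => -log (p x) - -log (p x₀) with hVdef
  have hV₀ : ∀ x, 0 ≤ V x := fun x => sub_nonneg.2 (hmin (mem_univ x))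
  have hdensity : (fun x => ENNReal.ofReal (p x)) =
      fun x => ENNReal.ofReal (p x₀ * exp (-V x)) := funext fun x => by
    rw [hVdef, show -(-log (p x) - -log (p x₀)) = log (p x) - log (p x₀) by ring,
      exp_sub, exp_log (hp x), exp_log (hp x₀), mul_div_cancel₀ _ (hp x₀).ne']
  have hVν : ∫⁻ x, ENNReal.ofReal (V x) ∂μ.withDensity (fun x => ENNReal.ofReal (p x)) ≤
      finrank ℝ E := by
    rw [hdensity] at hp₁ ⊢
    exact ConvexOn.lintegral_withDensity_exp_neg_le μ
      ((hconv.convexOn fun r => by positivity).add_const _) hV₀ (sub_self _) hp₁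
  calc ∫⁻ x, ‖x - x₀‖ₑ ^ 2 ∂μ.withDensity (fun x => ENNReal.ofReal (p x))
      ≤ ∫⁻ x, ENNReal.ofReal (2 / m) * ENNReal.ofReal (V x)
          ∂μ.withDensity (fun x => ENNReal.ofReal (p x)) := by
        refine lintegral_mono fun x => ?_
        rw [← ENNReal.ofReal_mul (by positivity), ← ofReal_norm,
          ← ENNReal.ofReal_pow (norm_nonneg _)]
        refine ENNReal.ofReal_le_ofReal ?_
        rw [div_mul_eq_mul_div, le_div_iff₀ hm]
        linarith [UniformConvexOn.le_sub_of_isMinOn hconv hmin (mem_univ _) (mem_univ x)]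
    _ = ENNReal.ofReal (2 / m) *
          ∫⁻ x, ENNReal.ofReal (V x) ∂μ.withDensity (fun x => ENNReal.ofReal (p x)) :=
        lintegral_const_mul' _ _ ENNReal.ofReal_ne_top
    _ ≤ ENNReal.ofReal (2 / m) * finrank ℝ E := by gcongr
    _ = ENNReal.ofReal (2 * finrank ℝ E / m) := by
        rw [← ENNReal.ofReal_natCast, ← ENNReal.ofReal_mul (by positivity)]
        ring_nf

end AddHaar

section SecondMoment

variable {α F : Type*} [MeasurableSpace α] [NormedAddCommGroup F] {ν : Measure α} {f : α → F}

theorem eLpNorm_two_eq_lintegral_enorm_sq_rpow (f : α → F) :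
    eLpNorm f 2 ν = (∫⁻ a, ‖f a‖ₑ ^ 2 ∂ν) ^ (1 / 2 : ℝ) := by
  simp [eLpNorm_eq_lintegral_rpow_enorm_toReal two_ne_zero ENNReal.ofNat_ne_top]

theorem sqrt_integral_norm_sq_eq_toReal_eLpNorm (hf : AEStronglyMeasurable f ν) :
    √(∫ a, ‖f a‖ ^ 2 ∂ν) = (eLpNorm f 2 ν).toReal := by
  rw [integral_eq_lintegral_of_nonneg_ae (ae_of_all _ fun a => by positivity) (by fun_prop),
    eLpNorm_two_eq_lintegral_enorm_sq_rpow, ← ENNReal.toReal_rpow, sqrt_eq_rpow]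
  congr 2
  refine lintegral_congr fun a => ?_
  rw [ENNReal.ofReal_pow (norm_nonneg _), ofReal_norm]

theorem sqrt_integral_norm_sq_le_of_lintegral_enorm_sub_sq_le [IsProbabilityMeasure ν]
    (hf : AEStronglyMeasurable f ν) (c : F) {r : ℝ} (hr : 0 ≤ r)
    (h : ∫⁻ a, ‖f a - c‖ₑ ^ 2 ∂ν ≤ ENNReal.ofReal (r ^ 2)) :
    √(∫ a, ‖f a‖ ^ 2 ∂ν) ≤ r + ‖c‖ := by
  have hcentered : eLpNorm (fun a => f a - c) 2 ν ≤ ENNReal.ofReal r := by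
    rw [eLpNorm_two_eq_lintegral_enorm_sq_rpow]
    calc (∫⁻ a, ‖f a - c‖ₑ ^ 2 ∂ν) ^ (1 / 2 : ℝ) ≤ ENNReal.ofReal (r ^ 2) ^ (1 / 2 : ℝ) := by
          gcongr
      _ = ENNReal.ofReal r := by
          rw [ENNReal.ofReal_rpow_of_nonneg (by positivity) (by norm_num), ← sqrt_eq_rpow,
            sqrt_sq hr]
  have hconst : eLpNorm (fun _ => c) 2 ν = ‖c‖ₑ := by
    rw [eLpNorm_const c two_ne_zero (IsProbabilityMeasure.ne_zero ν), measure_univ,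
      ENNReal.one_rpow, mul_one]
  have htriangle : eLpNorm f 2 ν ≤ eLpNorm (fun a => f a - c) 2 ν + eLpNorm (fun _ => c) 2 ν :=
    calc eLpNorm f 2 ν = eLpNorm ((fun a => f a - c) + fun _ => c) 2 ν := by
          congr 1 with a
          exact (sub_add_cancel (f a) c).symm
      _ ≤ _ := eLpNorm_add_le (hf.sub aestronglyMeasurable_const) aestronglyMeasurable_const
          one_le_two
  rw [sqrt_integral_norm_sq_eq_toReal_eLpNorm hf]
  calc (eLpNorm f 2 ν).toReal ≤ (ENNReal.ofReal r + ‖c‖ₑ).toReal :=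
        ENNReal.toReal_mono (ENNReal.add_ne_top.2 ⟨ENNReal.ofReal_ne_top, enorm_ne_top⟩)
          (hconst ▸ htriangle.trans (add_le_add_left hcentered _))
    _ = r + ‖c‖ := by
        rw [ENNReal.toReal_add ENNReal.ofReal_ne_top enorm_ne_top, ENNReal.toReal_ofReal hr,
          toReal_enorm]

end SecondMoment

theorem second_moment_bound_strongly_log_concave_general {d : ℕ}
    (p₀ : EuclideanSpace ℝ (Fin d) → ℝ) (m₀ : ℝ) (hm₀ : 0 < m₀)
    (hpos : ∀ x, 0 < p₀ x)
    (hint : ∫ x, p₀ x = 1)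
    (hconv : StrongConvexOn Set.univ m₀ (fun x => -Real.log (p₀ x)))
    (xstar : EuclideanSpace ℝ (Fin d))
    (hmin : ∀ x, -Real.log (p₀ xstar) ≤ -Real.log (p₀ x)) :
    Real.sqrt (∫ x, ‖x‖ ^ 2 * p₀ x) ≤ Real.sqrt (2 * d / m₀) + ‖xstar‖ := by
  have hp₀ : Integrable p₀ := Integrable.of_integral_ne_zero (by rw [hint]; exact one_ne_zero)
  have hp₁ : ∫⁻ x, ENNReal.ofReal (p₀ x) = 1 := by
    rw [← ofReal_integral_eq_lintegral_ofReal hp₀ (ae_of_all _ fun x => (hpos x).le), hint,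
      ENNReal.ofReal_one]
  set ν := volume.withDensity fun x => ENNReal.ofReal (p₀ x)
  have : IsProbabilityMeasure ν :=
    ⟨by rw [withDensity_apply _ MeasurableSet.univ, Measure.restrict_univ, hp₁]⟩
  have hmoment := hconv.lintegral_enorm_sub_sq_withDensity_le volume hm₀ hpos hp₁
    (x₀ := xstar) fun x _ => hmin x
  rw [finrank_euclideanSpace_fin, ← sq_sqrt (by positivity : 0 ≤ 2 * (d : ℝ) / m₀)] at hmoment
  have hintegral : ∫ x, ‖x‖ ^ 2 * p₀ x = ∫ x, ‖x‖ ^ 2 ∂ν := by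
    rw [integral_withDensity_eq_integral_toReal_smul₀ hp₀.aemeasurable.ennreal_ofReal
      (ae_of_all _ fun _ => ENNReal.ofReal_lt_top)]
    congr 1 with x
    rw [ENNReal.toReal_ofReal (hpos x).le, smul_eq_mul, mul_comm]
  rw [hintegral]
  exact sqrt_integral_norm_sq_le_of_lintegral_enorm_sub_sq_le aestronglyMeasurable_id xstar
    (sqrt_nonneg _) hmoment

theorem second_moment_bound_strongly_log_concave {d : ℕ}
    (p₀ : EuclideanSpace ℝ (Fin d) → ℝ) (m₀ : ℝ) (hm₀ : 0 < m₀)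
    (hdiff : Differentiable ℝ p₀) (hpos : ∀ x, 0 < p₀ x)
    (hint : ∫ x, p₀ x = 1)
    (hconv : StrongConvexOn Set.univ m₀ (fun x => -Real.log (p₀ x)))
    (xstar : EuclideanSpace ℝ (Fin d))
    (hmin : ∀ x, -Real.log (p₀ xstar) ≤ -Real.log (p₀ x))
    (huniq : ∀ x, -Real.log (p₀ x) = -Real.log (p₀ xstar) → x = xstar) :
    Real.sqrt (∫ x, ‖x‖ ^ 2 * p₀ x) ≤ Real.sqrt (2 * d / m₀) + ‖xstar‖ :=
  second_moment_bound_strongly_log_concave_general p₀ m₀ hm₀ hpos hint hconv xstar hmin
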